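/- Let μ and ν be Borel probability measures on ℂ. On the Hilbert space L²(ℂ×ℂ, μ⊗ν), for a bounded continuous function f : ℂ → ℂ define the bounded operator T_f by (T_f ψ)(x,y) = f(x)·∫_ℂ ψ(x,y′) dν(y′), and for a bounded continuous function g : ℂ → ℂ define S_g by (S_g ψ)(x,y) = g(y)·ψ(x,y). Then for every n ≥ 1 and all bounded continuous functions f₁,…,f_n, g₁,…,g_{n−1} : ℂ → ℂ, one has ⟨𝟙, T_{f_n} S_{g_{n−1}} T_{f_{n−1}} ⋯ S_{g_1} T_{f_1} 𝟙⟩ = (∏_{k=1}^{n−1} ∫_ℂ g_k dν) · ∫_ℂ f₁(x)f₂(x)⋯f_n(x) dμ(x), where 𝟙 denotes the constant function 1. (This is the moment factorization expressing that the operators M_x P₂ and M_y of the monotone model are monotonically independent with respect to the vector 𝟙.) -/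
import Mathlib


open MeasureTheory

/-- The operator `T_f` of the monotone model on `L²(ℂ×ℂ, μ⊗ν)`:
`(T_f ψ)(x,y) = f(x) · ∫ ψ(x,y′) dν(y′)`. -/
noncomputable def monT (ν : Measure ℂ) (f : ℂ → ℂ) (ψ : ℂ × ℂ → ℂ) : ℂ × ℂ → ℂ :=
  fun p => f p.1 * ∫ y, ψ (p.1, y) ∂ν

/-- The operator `S_g` of the monotone model: `(S_g ψ)(x,y) = g(y) · ψ(x,y)`. -/
noncomputable def monS (g : ℂ → ℂ) (ψ : ℂ × ℂ → ℂ) : ℂ × ℂ → ℂ :=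
  fun p => g p.2 * ψ p

/-- The alternating product `T_{f_{k+1}} S_{g_k} T_{f_k} ⋯ S_{g_1} T_{f_1}` applied to the
constant function `𝟙` (indices shifted to start at `0`). -/
noncomputable def monChain (ν : Measure ℂ) (f g : ℕ → ℂ → ℂ) : ℕ → ℂ × ℂ → ℂ
  | 0 => monT ν (f 0) (fun _ => (1 : ℂ))
  | k + 1 => monT ν (f (k + 1)) (monS (g k) (monChain ν f g k))

lemma monChain_eq (ν : Measure ℂ) [IsProbabilityMeasure ν] (f g : ℕ → ℂ → ℂ) :
    ∀ k p, monChain ν f g k p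
      = (∏ j ∈ Finset.range k, ∫ y, g j y ∂ν) * ∏ j ∈ Finset.range (k + 1), f j p.1 := by
  intro k
  induction k with
  | zero =>
      intro p
      simp [monChain, monT]
  | succ k ih =>
      intro p
      have : (fun y => monS (g k) (monChain ν f g k) (p.1, y))
          = fun y => g k y * ((∏ j ∈ Finset.range k, ∫ y, g j y ∂ν)
              * ∏ j ∈ Finset.range (k + 1), f j p.1) := by
        funext y
        simp [monS, ih (p.1, y)]
      rw [monChain, monT, this, integral_mul_const]
      simp only [Finset.prod_range_succ]
      ring

/-- Moment factorization for the monotone model: for bounded continuous `f₁,…,f_n` and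
`g₁,…,g_{n−1}`,
`⟨𝟙, T_{f_n} S_{g_{n−1}} ⋯ S_{g_1} T_{f_1} 𝟙⟩ = (∏ ∫ g_k dν) · ∫ f₁⋯f_n dμ`. -/
theorem monotone_model_moment_factorization
    (μ ν : Measure ℂ) [IsProbabilityMeasure μ] [IsProbabilityMeasure ν]
    (n : ℕ) (hn : 1 ≤ n) (f g : ℕ → BoundedContinuousFunction ℂ ℂ) :
    ∫ p, monChain ν (fun k => f k) (fun k => g k) (n - 1) p ∂(μ.prod ν)
      = (∏ k ∈ Finset.range (n - 1), ∫ y, g k y ∂ν)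
        * ∫ x, ∏ k ∈ Finset.range n, f k x ∂μ := by
  have hn' : n - 1 + 1 = n := Nat.succ_pred_eq_of_pos hn
  have h1 : ∀ p : ℂ × ℂ, monChain ν (fun k => f k) (fun k => g k) (n - 1) p
      = (∏ j ∈ Finset.range (n - 1), ∫ y, g j y ∂ν) * ∏ j ∈ Finset.range n, f j p.1 := by
    intro p
    rw [monChain_eq ν (fun k => f k) (fun k => g k) (n - 1) p, hn']
  simp only [h1]
  rw [integral_const_mul]
  congr 1
  have hF : Continuous fun x : ℂ => ∏ j ∈ Finset.range n, f j x := by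
    continuity
  have : ∫ p : ℂ × ℂ, (∏ j ∈ Finset.range n, f j p.1) ∂(μ.prod ν)
      = ∫ x, (∏ j ∈ Finset.range n, f j x) ∂((μ.prod ν).map Prod.fst) :=
    (integral_map measurable_fst.aemeasurable hF.aestronglyMeasurable).symm
  rw [this]
  have : (μ.prod ν).map Prod.fst = μ := by
    have := Measure.fst_prod (μ := μ) (ν := ν)
    rwa [Measure.fst] at this
  rw [this]
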